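/- Assume M > 0. For all finite Borel measures ν, λ⁺, λ⁻ on T one has M·φ( max( λ⁺(T) / (M·(1 + ν(T)²)), 1) ) ≤ Ent(λ⁺|θ_ν) + Ent(λ⁻|θ_ν), and likewise with λ⁻(T) in place of λ⁺(T) on the left-hand side. -/

import Mathlib

open MeasureTheory
open scoped ENNReal Classical

/-- The entropy function `φ(s) = s·log s − s + 1` (note `φ(0) = 1` since `Real.log 0 = 0`). -/
noncomputable def phiEnt (s : ℝ) : ℝ := s * Real.log s - s + 1

/-- Relative entropy `Ent(μ|ϑ) = ∫ φ(dμ/dϑ) dϑ` if `μ ≪ ϑ`, `+∞` otherwise. -/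
noncomputable def Ent {T : Type*} [MeasurableSpace T] (μ ϑ : Measure T) : ℝ≥0∞ :=
  if μ ≪ ϑ then ∫⁻ x, ENNReal.ofReal (phiEnt ((μ.rnDeriv ϑ x).toReal)) ∂ϑ else ⊤

/-- `c_ν(x) = ∫ c(x,y) ν(dy)`. -/
noncomputable def cInt {T : Type*} [MeasurableSpace T] (c : T → T → ℝ) (ν : Measure T) (x : T) : ℝ :=
  ∫ y, c x y ∂ν

/-- The birth kernel `κ⁺_ν = c_ν · γ`. -/
noncomputable def kBirth {T : Type*} [MeasurableSpace T] (γ : Measure T) (c : T → T → ℝ)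
    (ν : Measure T) : Measure T :=
  γ.withDensity fun x => ENNReal.ofReal (cInt c ν x)

/-- The death kernel `κ⁻_ν = c_ν · ν`. -/
noncomputable def kDeath {T : Type*} [MeasurableSpace T] (c : T → T → ℝ)
    (ν : Measure T) : Measure T :=
  ν.withDensity fun x => ENNReal.ofReal (cInt c ν x)

/-- The geometric mean `θ_ν` of `κ⁺_ν` and `κ⁻_ν`. -/
noncomputable def thetaM {T : Type*} [MeasurableSpace T] (γ : Measure T) (c : T → T → ℝ)
    (ν : Measure T) : Measure T :=
  (kBirth γ c ν + kDeath c ν).withDensity fun x =>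
    ((kBirth γ c ν).rnDeriv (kBirth γ c ν + kDeath c ν) x *
      (kDeath c ν).rnDeriv (kBirth γ c ν + kDeath c ν) x) ^ (1 / 2 : ℝ)

/-! `Ent` is Mathlib's Kullback–Leibler divergence `klDiv`, so Jensen's inequality gives
`Ent(λ|θ) ≥ m log (m / t) + t - m = t · φ(m / t)` with `m = λ(T)`, `t = θ(T)`. This perspective
of `φ` decreases in `t` on `(0, m]`, and `θ_ν ≤ κ⁺_ν + κ⁻_ν ≤ ‖c‖_∞ ν(T) (γ + ν)` bounds `t` by
`A = M (1 + ν(T)²)`; hence `Ent(λ|θ) ≥ A φ(m / A) ≥ M φ(m / A)` when `m > A`, while for `m ≤ A`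
the left-hand side vanishes. -/

open Real Set InformationTheory

lemma phiEnt_eq_klFun : phiEnt = klFun := by
  funext s
  rw [phiEnt, klFun_apply]
  ring

lemma Ent_eq_klDiv {α : Type*} [MeasurableSpace α] (μ ϑ : Measure α) [IsFiniteMeasure μ]
    [IsFiniteMeasure ϑ] : Ent μ ϑ = klDiv μ ϑ := by
  rw [Ent, klDiv_eq_lintegral_klFun, phiEnt_eq_klFun]

lemma antitoneOn_mul_log_div_add_sub (m : ℝ) :
    AntitoneOn (fun t => m * log (m / t) + t - m) (Ioc 0 m) := by
  rintro t ⟨ht, -⟩ A ⟨-, hAm⟩ htA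
  have hA : 0 < A := ht.trans_le htA
  have hm : 0 < m := hA.trans_le hAm
  have key : A - t ≤ m * log (A / t) :=
    calc A - t = A * (1 - (A / t)⁻¹) := by field_simp
      _ ≤ A * log (A / t) := by gcongr; exact one_sub_inv_le_log_of_pos (div_pos hA ht)
      _ ≤ m * log (A / t) := by gcongr; exact log_nonneg ((one_le_div ht).2 htA)
  dsimp only
  rw [log_div hm.ne' hA.ne', log_div hm.ne' ht.ne']
  rw [log_div hA.ne' ht.ne'] at key
  linarith

lemma ofReal_mul_klFun_max_le_klDiv {α : Type*} [MeasurableSpace α] (μ ν : Measure α)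
    [IsFiniteMeasure μ] [IsFiniteMeasure ν] {M A : ℝ} (hM : 0 < M) (hMA : M ≤ A)
    (hνA : ν.real univ ≤ A) :
    ENNReal.ofReal (M * klFun (max (μ.real univ / A) 1)) ≤ klDiv μ ν := by
  have hA : 0 < A := hM.trans_le hMA
  set m := μ.real univ
  rcases le_or_gt m A with hmA | hAm
  · simp [max_eq_right ((div_le_one hA).2 hmA), klFun_one]
  rcases eq_zero_or_neZero ν with rfl | _
  · have : NeZero μ := ⟨fun h => by simp [m, h] at hAm; linarith⟩
    simp [klDiv_zero_right]
  rw [max_eq_left ((one_le_div hA).2 hAm.le)]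
  calc ENNReal.ofReal (M * klFun (m / A))
      ≤ ENNReal.ofReal (A * klFun (m / A)) := by
        gcongr; exact klFun_nonneg (by positivity)
    _ = ENNReal.ofReal (m * log (m / A) + A - m) := by
        rw [klFun_apply]; field_simp
    _ ≤ ENNReal.ofReal (m * log (m / ν.real univ) + ν.real univ - m) :=
        ENNReal.ofReal_le_ofReal <| antitoneOn_mul_log_div_add_sub m
          ⟨measureReal_univ_pos, hνA.trans hAm.le⟩ ⟨hA, hAm.le⟩ hνA
    _ ≤ klDiv μ ν := mul_log_le_klDiv μ ν

lemma ENNReal.mul_rpow_one_half_le_add (a b : ℝ≥0∞) : (a * b) ^ (1 / 2 : ℝ) ≤ a + b :=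
  calc (a * b) ^ (1 / 2 : ℝ) ≤ ((a + b) ^ (2 : ℝ)) ^ (1 / 2 : ℝ) := by
        gcongr
        rw [ENNReal.rpow_two, sq]
        exact mul_le_mul' le_self_add le_add_self
    _ = a + b := by rw [← ENNReal.rpow_mul]; norm_num

lemma withDensity_rpow_one_half_rnDeriv_mul_le {α : Type*} [MeasurableSpace α]
    (μ₁ μ₂ ρ : Measure α) :
    ρ.withDensity (fun x => (μ₁.rnDeriv ρ x * μ₂.rnDeriv ρ x) ^ (1 / 2 : ℝ)) ≤ μ₁ + μ₂ := by
  refine Measure.le_intro fun s hs _ => ?_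
  rw [withDensity_apply _ hs, Measure.add_apply]
  calc ∫⁻ x in s, (μ₁.rnDeriv ρ x * μ₂.rnDeriv ρ x) ^ (1 / 2 : ℝ) ∂ρ
      ≤ ∫⁻ x in s, (μ₁.rnDeriv ρ x + μ₂.rnDeriv ρ x) ∂ρ :=
        lintegral_mono fun x => ENNReal.mul_rpow_one_half_le_add _ _
    _ = ∫⁻ x in s, μ₁.rnDeriv ρ x ∂ρ + ∫⁻ x in s, μ₂.rnDeriv ρ x ∂ρ :=
        lintegral_add_left (μ₁.measurable_rnDeriv ρ) _
    _ ≤ μ₁ s + μ₂ s :=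
        add_le_add (Measure.setLIntegral_rnDeriv_le s) (Measure.setLIntegral_rnDeriv_le s)

section Kernels

variable {T : Type*} [MeasurableSpace T] {c : T → T → ℝ} {K : ℝ}

lemma cInt_le_mul (ν : Measure T) [IsFiniteMeasure ν] (hc_nonneg : ∀ x y, 0 ≤ c x y)
    (hcK : ∀ x y, c x y ≤ K) (x : T) : cInt c ν x ≤ K * ν.real univ :=
  calc cInt c ν x ≤ ∫ _, K ∂ν :=
        integral_mono_of_nonneg (ae_of_all _ (hc_nonneg x)) (integrable_const K)
          (ae_of_all _ (hcK x))
    _ = K * ν.real univ := by rw [integral_const, smul_eq_mul, mul_comm]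

lemma withDensity_ofReal_cInt_le (μ ν : Measure T) [IsFiniteMeasure ν]
    (hc_nonneg : ∀ x y, 0 ≤ c x y) (hcK : ∀ x y, c x y ≤ K) :
    μ.withDensity (fun x => ENNReal.ofReal (cInt c ν x)) ≤
      ENNReal.ofReal (K * ν.real univ) • μ := by
  rw [← withDensity_const]
  exact withDensity_mono (ae_of_all _ fun x =>
    ENNReal.ofReal_le_ofReal (cInt_le_mul ν hc_nonneg hcK x))

lemma thetaM_le_smul (γ ν : Measure T) [IsFiniteMeasure ν] (hc_nonneg : ∀ x y, 0 ≤ c x y)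
    (hcK : ∀ x y, c x y ≤ K) :
    thetaM γ c ν ≤ ENNReal.ofReal (K * ν.real univ) • (γ + ν) := by
  rw [smul_add]
  exact (withDensity_rpow_one_half_rnDeriv_mul_le _ _ _).trans <|
    add_le_add (withDensity_ofReal_cInt_le γ ν hc_nonneg hcK)
      (withDensity_ofReal_cInt_le ν ν hc_nonneg hcK)

lemma thetaM_univ_le (γ ν : Measure T) [IsFiniteMeasure γ] [IsFiniteMeasure ν]
    (hc_nonneg : ∀ x y, 0 ≤ c x y) (hcK : ∀ x y, c x y ≤ K) (hK : 0 ≤ K) :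
    thetaM γ c ν univ ≤ ENNReal.ofReal (K * (1 + γ.real univ) * (1 + ν.real univ ^ 2)) := by
  have hγ : 0 ≤ γ.real univ := measureReal_nonneg
  have hν : 0 ≤ ν.real univ := measureReal_nonneg
  calc thetaM γ c ν univ ≤ (ENNReal.ofReal (K * ν.real univ) • (γ + ν)) univ :=
        thetaM_le_smul γ ν hc_nonneg hcK univ
    _ = ENNReal.ofReal (K * ν.real univ * (γ.real univ + ν.real univ)) := by
        rw [Measure.smul_apply, Measure.add_apply, smul_eq_mul,
          ENNReal.ofReal_mul (mul_nonneg hK hν), ENNReal.ofReal_add hγ hν, ofReal_measureReal,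
          ofReal_measureReal]
    _ ≤ ENNReal.ofReal (K * (1 + γ.real univ) * (1 + ν.real univ ^ 2)) :=
        ENNReal.ofReal_le_ofReal <| by
          nlinarith [mul_nonneg hK (mul_nonneg hγ (sq_nonneg (ν.real univ - 1))),
            mul_nonneg hK (mul_nonneg hγ hν)]

end Kernels

theorem dissipation_lower_bound_general {T : Type*}
    [MeasurableSpace T]
    (γ : Measure T) [IsFiniteMeasure γ]
    (c : T → T → ℝ)
    (hc_nonneg : ∀ x y, 0 ≤ c x y)
    (hc_bdd : BddAbove (Set.range fun p : T × T => c p.1 p.2))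
    (hM : 0 < (⨆ p : T × T, c p.1 p.2) * (1 + (γ Set.univ).toReal))
    (ν lamP lamM : Measure T) [IsFiniteMeasure ν] [IsFiniteMeasure lamP] [IsFiniteMeasure lamM] :
    ENNReal.ofReal ((⨆ p : T × T, c p.1 p.2) * (1 + (γ Set.univ).toReal) *
        phiEnt (max ((lamP Set.univ).toReal /
          ((⨆ p : T × T, c p.1 p.2) * (1 + (γ Set.univ).toReal) *
            (1 + (ν Set.univ).toReal ^ 2))) 1)) ≤
      Ent lamP (thetaM γ c ν) + Ent lamM (thetaM γ c ν) ∧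
    ENNReal.ofReal ((⨆ p : T × T, c p.1 p.2) * (1 + (γ Set.univ).toReal) *
        phiEnt (max ((lamM Set.univ).toReal /
          ((⨆ p : T × T, c p.1 p.2) * (1 + (γ Set.univ).toReal) *
            (1 + (ν Set.univ).toReal ^ 2))) 1)) ≤
      Ent lamP (thetaM γ c ν) + Ent lamM (thetaM γ c ν) := by
  set K := ⨆ p : T × T, c p.1 p.2
  have hθ := thetaM_univ_le γ ν hc_nonneg (fun x y => le_ciSup hc_bdd (x, y))
    (Real.iSup_nonneg fun p => hc_nonneg p.1 p.2)
  have : IsFiniteMeasure (thetaM γ c ν) := ⟨hθ.trans_lt ENNReal.ofReal_lt_top⟩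
  have hθA := ENNReal.toReal_le_of_le_ofReal (by positivity) hθ
  have hMA : K * (1 + γ.real univ) ≤ K * (1 + γ.real univ) * (1 + ν.real univ ^ 2) :=
    le_mul_of_one_le_right hM.le (le_add_of_nonneg_right (sq_nonneg _))
  simp only [phiEnt_eq_klFun, Ent_eq_klDiv]
  exact ⟨(ofReal_mul_klFun_max_le_klDiv lamP _ hM hMA hθA).trans le_self_add,
    (ofReal_mul_klFun_max_le_klDiv lamM _ hM hMA hθA).trans le_add_self⟩

/-- Lemma 2.1(iii): with `M = ‖c‖_∞·(1 + γ(T)) > 0`, for all finite measures `ν, λ⁺, λ⁻`,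
`M·φ(max(λ⁺(T)/(M·(1+ν(T)²)), 1)) ≤ Ent(λ⁺|θ_ν) + Ent(λ⁻|θ_ν)`, and likewise for `λ⁻`. -/
theorem dissipation_lower_bound {T : Type*} [TopologicalSpace T] [CompactSpace T] [PolishSpace T]
    [MeasurableSpace T] [BorelSpace T]
    (γ : Measure T) [IsFiniteMeasure γ]
    (c : T → T → ℝ) (hc_meas : Measurable fun p : T × T => c p.1 p.2)
    (hc_nonneg : ∀ x y, 0 ≤ c x y)
    (hc_bdd : BddAbove (Set.range fun p : T × T => c p.1 p.2))
    (hc_diag : ∀ x, c x x = 0)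
    (hM : 0 < (⨆ p : T × T, c p.1 p.2) * (1 + (γ Set.univ).toReal))
    (ν lamP lamM : Measure T) [IsFiniteMeasure ν] [IsFiniteMeasure lamP] [IsFiniteMeasure lamM] :
    ENNReal.ofReal ((⨆ p : T × T, c p.1 p.2) * (1 + (γ Set.univ).toReal) *
        phiEnt (max ((lamP Set.univ).toReal /
          ((⨆ p : T × T, c p.1 p.2) * (1 + (γ Set.univ).toReal) *
            (1 + (ν Set.univ).toReal ^ 2))) 1)) ≤
      Ent lamP (thetaM γ c ν) + Ent lamM (thetaM γ c ν) ∧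
    ENNReal.ofReal ((⨆ p : T × T, c p.1 p.2) * (1 + (γ Set.univ).toReal) *
        phiEnt (max ((lamM Set.univ).toReal /
          ((⨆ p : T × T, c p.1 p.2) * (1 + (γ Set.univ).toReal) *
            (1 + (ν Set.univ).toReal ^ 2))) 1)) ≤
      Ent lamP (thetaM γ c ν) + Ent lamM (thetaM γ c ν) :=
  dissipation_lower_bound_general γ c hc_nonneg hc_bdd hM ν lamP lamM
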